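/- arXiv:2404.12989 — 2 statements merged into one kernel-verified Lean document; each statement's English description precedes it below -/
import Mathlib

section
/- If A is a p×t fully interlacing matrix and B a t×q fully interlacing matrix of formal power series over ℝ, then the product AB is fully interlacing. -/
open scoped BigOperators

/-- The coefficient of `x^n` in a power series, for an integer `n`
(zero when `n < 0`). -/
noncomputable def intCoeff (A : PowerSeries ℝ) (n : ℤ) : ℝ :=
  if 0 ≤ n then PowerSeries.coeff (R := ℝ) n.toNat A else 0

/-- A `ℤ × ℤ` matrix is totally positive (TP) if every finite square
submatrix (rows and columns chosen in increasing order) has nonnegative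
determinant. -/
def TP (M : ℤ → ℤ → ℝ) : Prop :=
  ∀ (n : ℕ) (r c : Fin n → ℤ), StrictMono r → StrictMono c →
    0 ≤ (Matrix.of fun a b => M (r a) (c b)).det

/-- The interlacing matrix `Lace(A)` of a `p × q` matrix of formal power
series: the `(u,v)`-entry, for `u = p·u' + i` (`0 ≤ i < p`) and
`v = q·v' + j` (`0 ≤ j < q`), is the coefficient of `x^(v'-u')` in `A i j`. -/
noncomputable def lace {p q : ℕ} [NeZero p] [NeZero q]
    (A : Fin p → Fin q → PowerSeries ℝ) : ℤ → ℤ → ℝ := fun u v =>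
  intCoeff
    (A ⟨(u % (p : ℤ)).toNat, by
          have hp : (0 : ℤ) < (p : ℤ) := by
            exact_mod_cast Nat.pos_of_ne_zero (NeZero.ne p)
          have h1 := Int.emod_nonneg u hp.ne'
          have h2 := Int.emod_lt_of_pos u hp
          omega⟩
       ⟨(v % (q : ℤ)).toNat, by
          have hq : (0 : ℤ) < (q : ℤ) := by
            exact_mod_cast Nat.pos_of_ne_zero (NeZero.ne q)
          have h1 := Int.emod_nonneg v hq.ne'
          have h2 := Int.emod_lt_of_pos v hq
          omega⟩)
    (v / (q : ℤ) - u / (p : ℤ))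

/-- A matrix of formal power series is fully interlacing when its
interlacing matrix is totally positive. -/
def FullyInterlacing {p q : ℕ} [NeZero p] [NeZero q]
    (A : Fin p → Fin q → PowerSeries ℝ) : Prop :=
  TP (lace A)

/-- A sequence of power series viewed as a `p × 1` column matrix. -/
noncomputable def colMat {p : ℕ} (A : Fin p → PowerSeries ℝ) :
    Fin p → Fin 1 → PowerSeries ℝ := fun i _ => A i

/-- `A(x)` interlaces `B(x)`: the `2 × 1` column `(A, B)ᵀ` is fully
interlacing. -/
def SeriesInterlaces (A B : PowerSeries ℝ) : Prop :=
  FullyInterlacing (colMat ![A, B])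

/-- A power series is AESW (a Pólya frequency sequence) when its Toeplitz
matrix `(a_{v-u})` is totally positive. -/
def IsAESW (A : PowerSeries ℝ) : Prop :=
  TP fun u v => intCoeff A (v - u)

/-- The `k`-th Veronese `r`-section `S_k^{(r)} A(x) = ∑_{n ≥ 0} a_{k+rn} xⁿ`. -/
noncomputable def veronese (r k : ℕ) (A : PowerSeries ℝ) : PowerSeries ℝ :=
  PowerSeries.mk fun n => PowerSeries.coeff (R := ℝ) (k + r * n) A

/-! Lace is multiplicative: `Lace(AB) = Lace(A) Lace(B)`, where each entry of the product is a
finite sum because `Lace(A)_{uw}` vanishes unless `⌊u/p⌋ ≤ ⌊w/t⌋` and `Lace(B)_{wv}` vanishes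
unless `⌊w/t⌋ ≤ ⌊v/q⌋`. So a finite square submatrix of `Lace(AB)` is the product of a finite
strip of rows of `Lace(A)` with a finite strip of columns of `Lace(B)`, and by Cauchy–Binet its
determinant is a sum of products of minors of `Lace(A)` and `Lace(B)`, all nonnegative. -/

open Finset Equiv Matrix Function

theorem Matrix.det_mul_eq_sum_det_submatrix {R l m : Type*} [CommRing R] [Fintype l]
    [DecidableEq l] [Fintype m] [DecidableEq m] (M : Matrix l m R) (N : Matrix m l R) :
    (M * N).det = ∑ p : l → m, (M.submatrix id p).det * ∏ i, N (p i) i := by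
  simp only [det_apply', mul_apply, prod_univ_sum, mul_sum, Fintype.piFinset_univ,
    submatrix_apply, id, sum_mul, prod_mul_distrib, mul_assoc]
  exact sum_comm

theorem Finset.sum_injective_eq_sum_strictMono_perm {α β : Type*} [LinearOrder α] [Fintype α]
    [AddCommMonoid β] {n : ℕ} (f : (Fin n → α) → β) :
    ∑ p with Injective p, f p = ∑ e with StrictMono e, ∑ τ : Perm (Fin n), f (e ∘ τ) := by
  rw [← sum_product']
  symm
  refine sum_nbij' (fun x => x.1 ∘ x.2) (fun p => (p ∘ Tuple.sort p, (Tuple.sort p)⁻¹))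
    ?_ ?_ ?_ ?_ (fun _ _ => rfl)
  · simp only [mem_product, mem_filter, mem_univ, true_and, and_imp]
    rintro ⟨e, τ⟩ he -
    exact he.injective.comp τ.injective
  · simp only [mem_product, mem_filter, mem_univ, true_and, and_true]
    intro p hp
    exact (Tuple.monotone_sort p).strictMono_of_injective (hp.comp (Tuple.sort p).injective)
  · simp only [mem_product, mem_filter, mem_univ, true_and, and_imp]
    rintro ⟨e, τ⟩ he -
    have hsort : τ⁻¹ = Tuple.sort (e ∘ τ) := by
      refine Tuple.eq_sort_iff.mpr ⟨?_, fun i j hij heq => ?_⟩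
      · convert he.monotone using 1
        ext i; simp
      · simp only [Perm.coe_inv, Function.comp_apply, apply_symm_apply] at heq
        exact absurd (he.injective heq) hij.ne
    simp [← hsort, comp_assoc]
  · intro p _
    simp [comp_assoc]

theorem Matrix.det_mul_eq_sum_strictMono {R : Type*} [CommRing R] {n m : ℕ}
    (M : Matrix (Fin n) (Fin m) R) (N : Matrix (Fin m) (Fin n) R) :
    (M * N).det = ∑ e : Fin n → Fin m with StrictMono e,
      (M.submatrix id e).det * (N.submatrix e id).det := by
  have hvanish : ∀ p : Fin n → Fin m, ¬ Injective p → (M.submatrix id p).det = 0 := by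
    intro p hp
    obtain ⟨i, j, hij, hne⟩ := Function.not_injective_iff.mp hp
    exact det_zero_of_column_eq hne fun k => by simp [hij]
  rw [det_mul_eq_sum_det_submatrix, ← sum_filter_of_ne (p := Injective)
    fun p _ h => by_contra fun hp => h (by rw [hvanish p hp, zero_mul]),
    sum_injective_eq_sum_strictMono_perm]
  refine sum_congr rfl fun e _ => ?_
  rw [det_apply' (N.submatrix e id), mul_sum]
  refine sum_congr rfl fun τ _ => ?_
  rw [show M.submatrix id (e ∘ τ) = (M.submatrix id e).submatrix id τ from rfl, det_permute']
  simp only [submatrix_apply, comp_def, id]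
  ring

theorem TP.of_eq_sum_mul {M N P : ℤ → ℤ → ℝ} (hM : TP M) (hN : TP N)
    (hP : ∀ U V : Finset ℤ, ∃ W : Finset ℤ,
      ∀ u ∈ U, ∀ v ∈ V, P u v = ∑ w ∈ W, M u w * N w v) :
    TP P := by
  intro n r c hr hc
  obtain ⟨W, hW⟩ := hP (univ.image r) (univ.image c)
  set w := W.orderEmbOfFin rfl
  have hfactor : of (fun a b => P (r a) (c b))
      = of (fun a k => M (r a) (w k)) * of (fun k b => N (w k) (c b)) := by
    ext a b
    rw [of_apply, hW _ (mem_image_of_mem r (mem_univ a)) _ (mem_image_of_mem c (mem_univ b)),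
      mul_apply, ← sum_coe_sort W]
    exact (Fintype.sum_equiv (W.orderIsoOfFin rfl).toEquiv _ _ fun k => by simp [w]).symm
  rw [hfactor, det_mul_eq_sum_strictMono]
  refine sum_nonneg fun e he => mul_nonneg ?_ ?_
  · exact hM n r (w ∘ e) hr (w.strictMono.comp (mem_filter.mp he).2)
  · exact hN n (w ∘ e) c (w.strictMono.comp (mem_filter.mp he).2) hc

theorem intCoeff_of_neg (F : PowerSeries ℝ) {n : ℤ} (hn : n < 0) : intCoeff F n = 0 :=
  if_neg hn.not_ge

theorem intCoeff_natCast (F : PowerSeries ℝ) (n : ℕ) :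
    intCoeff F n = PowerSeries.coeff n F := by
  simp [intCoeff]

theorem intCoeff_sum {ι : Type*} (s : Finset ι) (F : ι → PowerSeries ℝ) (n : ℤ) :
    intCoeff (∑ k ∈ s, F k) n = ∑ k ∈ s, intCoeff (F k) n := by
  unfold intCoeff
  split_ifs <;> simp

theorem intCoeff_mul_eq_sum_Ico (F G : PowerSeries ℝ) {m n lo hi : ℤ} (hlo : lo ≤ m)
    (hhi : n < hi) :
    intCoeff (F * G) (n - m) = ∑ w ∈ Ico lo hi, intCoeff F (w - m) * intCoeff G (n - w) := by
  -- only `w ∈ Icc m n` contributes, and `Icc m n` is in bijection with `antidiagonal (n - m)`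
  rw [← sum_subset (s₁ := Icc m n)
    (fun w hw => by simp only [mem_Icc, mem_Ico] at hw ⊢; omega) fun w _ hw => by
      rcases lt_or_ge w m with h | h
      · rw [intCoeff_of_neg F (by omega), zero_mul]
      · rw [intCoeff_of_neg G (by simp only [mem_Icc] at hw; omega), mul_zero]]
  rcases lt_or_ge n m with h | h
  · rw [Icc_eq_empty (by omega), sum_empty, intCoeff_of_neg _ (by omega)]
  obtain ⟨d, hd⟩ : ∃ d : ℕ, n - m = d := ⟨(n - m).toNat, by omega⟩
  rw [hd, intCoeff_natCast, PowerSeries.coeff_mul]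
  refine sum_nbij' (fun x => m + x.1) (fun w => ((w - m).toNat, (n - w).toNat)) ?_ ?_ ?_ ?_ ?_
  all_goals simp only [Finset.HasAntidiagonal.mem_antidiagonal, mem_Icc, Prod.forall,
    Prod.mk.injEq]
  iterate 4 (intros; omega)
  intro a b hab
  rw [show m + (a : ℤ) - m = (a : ℕ) by ring, show n - (m + a) = (b : ℕ) by omega,
    intCoeff_natCast, intCoeff_natCast]

theorem lace_apply {p q : ℕ} [NeZero p] [NeZero q] (A : Fin p → Fin q → PowerSeries ℝ)
    (u v : ℤ) :
    lace A u v = intCoeff (A (Int.divModEquiv p u).2 (Int.divModEquiv q v).2)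
      ((Int.divModEquiv q v).1 - (Int.divModEquiv p u).1) := by
  simp only [lace, Int.divModEquiv_apply, Fin.ofNat, Int.natMod]
  congr <;> exact (Nat.mod_eq_of_lt (Int.natMod_lt (NeZero.ne _))).symm

/- `(Int.divModEquiv p).symm (u', i) = u' * p + i` is the row index written `p·u' + i` in the
definition of `lace`. -/
theorem lace_divModEquiv_symm {p q : ℕ} [NeZero p] [NeZero q]
    (A : Fin p → Fin q → PowerSeries ℝ) (x : ℤ × Fin p) (y : ℤ × Fin q) :
    lace A ((Int.divModEquiv p).symm x) ((Int.divModEquiv q).symm y)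
      = intCoeff (A x.2 y.2) (y.1 - x.1) := by
  rw [lace_apply, Equiv.apply_symm_apply, Equiv.apply_symm_apply]

theorem lace_mul_eq_sum {p t q : ℕ} [NeZero p] [NeZero t] [NeZero q]
    (A : Fin p → Fin t → PowerSeries ℝ) (B : Fin t → Fin q → PowerSeries ℝ)
    (x : ℤ × Fin p) (y : ℤ × Fin q) {lo hi : ℤ} (hlo : lo ≤ x.1) (hhi : y.1 < hi) :
    lace (fun i j => ∑ k, A i k * B k j) ((Int.divModEquiv p).symm x)
        ((Int.divModEquiv q).symm y)
      = ∑ z ∈ Ico lo hi ×ˢ univ,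
          lace A ((Int.divModEquiv p).symm x) ((Int.divModEquiv t).symm z)
            * lace B ((Int.divModEquiv t).symm z) ((Int.divModEquiv q).symm y) := by
  simp only [lace_divModEquiv_symm, intCoeff_sum, intCoeff_mul_eq_sum_Ico _ _ hlo hhi]
  rw [sum_product_right]

theorem exists_lace_mul_eq_sum {p t q : ℕ} [NeZero p] [NeZero t] [NeZero q]
    (A : Fin p → Fin t → PowerSeries ℝ) (B : Fin t → Fin q → PowerSeries ℝ)
    (U V : Finset ℤ) :
    ∃ W : Finset ℤ, ∀ u ∈ U, ∀ v ∈ V,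
      lace (fun i j => ∑ k, A i k * B k j) u v = ∑ w ∈ W, lace A u w * lace B w v := by
  obtain ⟨lo, hlo⟩ := (U.image fun u => (Int.divModEquiv p u).1).bddBelow
  obtain ⟨hi, hhi⟩ := (V.image fun v => (Int.divModEquiv q v).1).bddAbove
  refine ⟨(Ico lo (hi + 1) ×ˢ univ).map (Int.divModEquiv t).symm.toEmbedding,
    fun u hu v hv => ?_⟩
  obtain ⟨x, rfl⟩ := (Int.divModEquiv p).symm.surjective u
  obtain ⟨y, rfl⟩ := (Int.divModEquiv q).symm.surjective v
  rw [sum_map]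
  refine lace_mul_eq_sum A B x y ?_ ?_
  · simpa only [Equiv.apply_symm_apply] using hlo (mem_image_of_mem _ hu)
  · exact Int.lt_add_one_iff.mpr
      (by simpa only [Equiv.apply_symm_apply] using hhi (mem_image_of_mem _ hv))

/-- Products of fully interlacing matrices of formal power series are
fully interlacing. -/
theorem stmt5 {p t q : ℕ} [NeZero p] [NeZero t] [NeZero q]
    (A : Fin p → Fin t → PowerSeries ℝ) (B : Fin t → Fin q → PowerSeries ℝ)
    (hA : FullyInterlacing A) (hB : FullyInterlacing B) :
    FullyInterlacing fun i j => ∑ k, A i k * B k j :=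
  TP.of_eq_sum_mul hA hB (exists_lace_mul_eq_sum A B)
end

section
/- If A(x) ∈ ℝ[[x]] is an AESW series (its Toeplitz matrix is totally positive) and r is a positive integer, then every Veronese r-section S_k^{(r)}A(x) (0 ≤ k < r) is also an AESW series, and moreover the row vector (S_0^{(r)}A, S_1^{(r)}A, ..., S_{r-1}^{(r)}A) is a fully interlacing 1×r matrix. -/
open scoped BigOperators

/-!
Both the Toeplitz matrix of a Veronese section `S_k^{(r)} A` and the interlacing matrix of the row
`(S_0^{(r)} A, …, S_{r-1}^{(r)} A)` are submatrices of the Toeplitz matrix `(a_{v-u})` of `A`,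
obtained by keeping the rows `r u` and the columns `k + r v`, respectively all columns `v`
(write `v = (v mod r) + r ⌊v / r⌋`). Total positivity passes to such submatrices.
-/

theorem TP.comp_strictMono {M : ℤ → ℤ → ℝ} (hM : TP M) {f g : ℤ → ℤ}
    (hf : StrictMono f) (hg : StrictMono g) : TP fun u v => M (f u) (g v) :=
  fun n row col hrow hcol => hM n (f ∘ row) (g ∘ col) (hf.comp hrow) (hg.comp hcol)

theorem intCoeff_veronese (A : PowerSeries ℝ) {r k : ℕ} (hk : k < r) (m : ℤ) :
    intCoeff (veronese r k A) m = intCoeff A (k + r * m) := by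
  unfold intCoeff veronese
  rcases le_or_gt 0 m with hm | hm
  · lift m to ℕ using hm
    rw [if_pos (by positivity), if_pos (by positivity), PowerSeries.coeff_mk]
    congr 1
  · have : (k : ℤ) + r * m < 0 := by nlinarith
    rw [if_neg hm.not_ge, if_neg this.not_ge]

theorem lace_veronese_row (A : PowerSeries ℝ) (r : ℕ) [NeZero r] (u v : ℤ) :
    lace (fun (_ : Fin 1) (k : Fin r) => veronese r k A) u v = intCoeff A (v - r * u) := by
  have hr : (0 : ℤ) < r := by exact_mod_cast Nat.pos_of_ne_zero (NeZero.ne r)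
  have hmod_nonneg := Int.emod_nonneg v hr.ne'
  have hmod_lt := Int.emod_lt_of_pos v hr
  rw [lace, intCoeff_veronese A (by omega)]
  congr 1
  rw [Int.toNat_of_nonneg hmod_nonneg, Nat.cast_one, Int.ediv_one]
  linarith [Int.emod_add_mul_ediv v r, mul_sub (r : ℤ) (v / r) u]

theorem IsAESW.veronese {A : PowerSeries ℝ} (hA : IsAESW A) {r k : ℕ} (hk : k < r) :
    IsAESW (_root_.veronese r k A) := by
  have hr : (0 : ℤ) < r := by omega
  have hsub := TP.comp_strictMono hA (strictMono_mul_left_of_pos hr)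
    ((strictMono_mul_left_of_pos hr).const_add (k : ℤ))
  unfold IsAESW
  convert hsub using 3 with u v
  rw [intCoeff_veronese A hk]
  congr 1
  ring

theorem IsAESW.fullyInterlacing_veronese_row {A : PowerSeries ℝ} (hA : IsAESW A) (r : ℕ)
    [NeZero r] : FullyInterlacing fun (_ : Fin 1) (k : Fin r) => _root_.veronese r k A := by
  have hr : (0 : ℤ) < r := by exact_mod_cast Nat.pos_of_ne_zero (NeZero.ne r)
  have hsub := TP.comp_strictMono hA (strictMono_mul_left_of_pos hr) strictMono_id
  unfold FullyInterlacing
  convert hsub using 3 with u v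
  exact lace_veronese_row A r u v

/-- Every Veronese `r`-section of an AESW series is AESW; moreover the row
vector `(S₀^{(r)}A, S₁^{(r)}A, …, S_{r-1}^{(r)}A)` is a fully interlacing
`1 × r` matrix. -/
theorem stmt15 (A : PowerSeries ℝ) (hA : IsAESW A) (r : ℕ) [NeZero r] :
    (∀ k : Fin r, IsAESW (veronese r (k : ℕ) A)) ∧
    FullyInterlacing fun (_ : Fin 1) (k : Fin r) => veronese r (k : ℕ) A :=
  ⟨fun k => hA.veronese k.isLt, hA.fullyInterlacing_veronese_row r⟩
end
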